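/- For every b > 0 and every τ with 0 < τ < 2π/b, one has ψ_b(τ) = 3τ − b·τ²·cos(bτ/2)/sin(bτ/2) − sin(bτ)/b > 0. (On this interval 0 < bτ/2 < π, so sin(bτ/2) ≠ 0.) -/
import Mathlib


open Real

/-- The function `ψ_b(τ) = 3τ − b·τ²·cos(bτ/2)/sin(bτ/2) − sin(bτ)/b`. -/
noncomputable def psi (b τ : ℝ) : ℝ :=
  3 * τ - b * τ ^ 2 * Real.cos (b * τ / 2) / Real.sin (b * τ / 2) - Real.sin (b * τ) / b

lemma aux_xcos_lt_sin {x : ℝ} (hx0 : 0 < x) (hxπ : x < Real.pi) :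
    x * Real.cos x < Real.sin x := by
  have hmono : StrictMonoOn (fun t : ℝ => Real.sin t - t * Real.cos t)
      (Set.Icc 0 Real.pi) := by
    apply strictMonoOn_of_deriv_pos (convex_Icc 0 Real.pi)
    · fun_prop
    · intro t ht
      rw [interior_Icc] at ht
      have hd : HasDerivAt (fun t : ℝ => Real.sin t - t * Real.cos t)
          (Real.cos t - (1 * Real.cos t + t * (-Real.sin t))) t :=
        (Real.hasDerivAt_sin t).sub ((hasDerivAt_id t).mul (Real.hasDerivAt_cos t))
      rw [hd.deriv]
      have hs := Real.sin_pos_of_pos_of_lt_pi ht.1 ht.2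
      nlinarith [mul_pos ht.1 hs]
  have h := hmono (Set.left_mem_Icc.mpr Real.pi_pos.le)
    ⟨hx0.le, hxπ.le⟩ hx0
  simpa using h

/-- For every `b > 0` and every `τ` with `0 < τ < 2π/b`,
one has `ψ_b(τ) > 0`. -/
theorem statement4 (b : ℝ) (hb : 0 < b) (τ : ℝ) (hτ0 : 0 < τ)
    (hτ : τ < 2 * Real.pi / b) : 0 < psi b τ := by
  set x := b * τ / 2 with hx
  have hx0 : 0 < x := by positivity
  have hxπ : x < Real.pi := by
    rw [lt_div_iff₀ hb] at hτ
    rw [hx]; nlinarith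
  have hsin : 0 < Real.sin x := Real.sin_pos_of_pos_of_lt_pi hx0 hxπ
  have hbt : b * τ = 2 * x := by rw [hx]; ring
  have hpsi : psi b τ =
      (6 * x * Real.sin x - 4 * x ^ 2 * Real.cos x - 2 * Real.sin x ^ 2 * Real.cos x) /
        (b * Real.sin x) := by
    unfold psi
    have hτx : τ = 2 * x / b := by rw [hx]; field_simp
    rw [hbt, Real.sin_two_mul, show (2:ℝ) * x / 2 = x by ring, hτx]
    field_simp
    ring
  rw [hpsi]
  apply div_pos _ (mul_pos hb hsin)
  rcases le_or_gt (Real.cos x) 0 with hc | hc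
  · nlinarith [mul_pos hx0 hsin, mul_nonneg (sq_nonneg x) (neg_nonneg.2 hc),
      mul_nonneg (sq_nonneg (Real.sin x)) (neg_nonneg.2 hc)]
  · have h1 : x * Real.cos x < Real.sin x := aux_xcos_lt_sin hx0 hxπ
    have h2 : 2 * Real.sin x * Real.cos x < 2 * x := by
      have := Real.sin_lt (show (0:ℝ) < 2 * x by positivity)
      rwa [Real.sin_two_mul] at this
    nlinarith [mul_pos hx0 hsin, mul_lt_mul_of_pos_left h1 (show (0:ℝ) < 4 * x by positivity),
      mul_pos hsin hc, mul_lt_mul_of_pos_left h2 hsin]
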